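/- arXiv:1905.10124 — 5 statements merged into one kernel-verified Lean document; each statement's English description precedes it below -/
import Mathlib

section
/- Let x₁,…,xₙ ∈ ℝ^p and y₁,…,yₙ ∈ ℝ^q. Then min over π ∈ Πₙ of ∑_{i,j,k,l} (‖x_i − x_k‖² − ‖y_j − y_l‖²)² π_{ij} π_{kl} equals min over permutations σ of {1,…,n} of (1/n²) ∑_{i,k=1}^n (‖x_i − x_k‖² − ‖y_{σ(i)} − y_{σ(k)}‖²)², where ‖·‖ denotes the Euclidean norm in ℝ^p and ℝ^q respectively. In other words, for uniform discrete measures with squared Euclidean costs, the Gromov-Wasserstein minimum over couplings equals the Gromov-Monge minimum over permutations. -/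
/-!
For a coefficient tensor `c`, the Gromov–Wasserstein energy `π ↦ ∑ c i j k l * π i j * π k l` is
the quadratic form of a symmetric bilinear form. For squared Euclidean costs this form is negative
semidefinite on matrices `δ` with vanishing row and column sums: after expanding
`‖x i - x k‖² = ‖x i‖² + ‖x k‖² - 2 ⟪x i, x k⟫` (and likewise for `y`), every term of the
coefficient that ignores one of the four indices is annihilated by the zero marginals of `δ`, and
what is left is `-8 ∑ ⟪x i, x k⟫ ⟪y j, y l⟫ δ i j δ k l`, a quadratic form of the Kronecker
product of two Gram matrices, hence `≤ 0`. The energy is therefore concave on the polytope `Πₙ`.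
By Birkhoff's theorem `Πₙ` is the convex hull of the matrices `n⁻¹ • P_σ`, and a concave function
on a convex hull attains its minimum at a generator, where it is the Gromov–Monge cost of `σ`.
-/

open Finset

open scoped InnerProductSpace Pointwise

theorem sum_comm_pairs {α β γ δ M : Type*} [Fintype α] [Fintype β] [Fintype γ] [Fintype δ]
    [AddCommMonoid M] (f : α → β → γ → δ → M) :
    ∑ i, ∑ j, ∑ k, ∑ l, f i j k l = ∑ k, ∑ l, ∑ i, ∑ j, f i j k l :=
  calc _ = ∑ i, ∑ k, ∑ j, ∑ l, f i j k l := sum_congr rfl fun _ _ => sum_comm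
    _ = ∑ k, ∑ i, ∑ j, ∑ l, f i j k l := sum_comm
    _ = _ := sum_congr rfl fun _ _ => (sum_congr rfl fun _ _ => sum_comm).trans sum_comm

theorem LinearMap.BilinForm.IsSymm.concaveOn_apply_self {E : Type*} [AddCommGroup E]
    [Module ℝ E] {B : LinearMap.BilinForm ℝ E} (hB : B.IsSymm) {s : Set E} (hs : Convex ℝ s)
    (hneg : ∀ a ∈ s, ∀ b ∈ s, B (a - b) (a - b) ≤ 0) : ConcaveOn ℝ s fun x => B x x := by
  refine ⟨hs, fun a ha b hb t u ht hu htu => ?_⟩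
  have hab := hneg a ha b hb
  simp only [map_add, map_sub, map_smul, LinearMap.add_apply, LinearMap.sub_apply,
    LinearMap.smul_apply, smul_eq_mul, hB.eq b a] at hab ⊢
  obtain rfl : u = 1 - t := by linarith
  -- `t B a a + u B b b - B (t a + u b) (t a + u b) = t u B (a - b) (a - b)`
  nlinarith [mul_nonneg ht hu]

section GWForm

variable {ι κ : Type*} [Fintype ι] [Fintype κ]

def gwForm (c : ι → κ → ι → κ → ℝ) : LinearMap.BilinForm ℝ (Matrix ι κ ℝ) :=
  LinearMap.mk₂ ℝ (fun M N => ∑ i, ∑ j, ∑ k, ∑ l, c i j k l * M i j * N k l)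
    (fun _ _ _ => by simp only [Matrix.add_apply, add_mul, mul_add, sum_add_distrib])
    (fun r _ _ => by
      simp only [Matrix.smul_apply, smul_eq_mul, mul_sum, mul_left_comm _ r, mul_assoc])
    (fun _ _ _ => by simp only [Matrix.add_apply, mul_add, sum_add_distrib])
    (fun r _ _ => by
      simp only [Matrix.smul_apply, smul_eq_mul, mul_sum, mul_left_comm _ r, mul_assoc])

@[simp]
theorem gwForm_apply (c : ι → κ → ι → κ → ℝ) (M N : Matrix ι κ ℝ) :
    gwForm c M N = ∑ i, ∑ j, ∑ k, ∑ l, c i j k l * M i j * N k l := rfl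

theorem gwForm_add (c c' : ι → κ → ι → κ → ℝ) : gwForm (c + c') = gwForm c + gwForm c' := by
  ext M N
  simp only [gwForm_apply, LinearMap.add_apply, Pi.add_apply, add_mul, sum_add_distrib]

theorem gwForm_smul (r : ℝ) (c : ι → κ → ι → κ → ℝ) : gwForm (r • c) = r • gwForm c := by
  ext M N
  simp only [gwForm_apply, LinearMap.smul_apply, Pi.smul_apply, smul_eq_mul, mul_sum, mul_assoc]

theorem gwForm_swap (c : ι → κ → ι → κ → ℝ) (M N : Matrix ι κ ℝ) :
    gwForm c M N = gwForm (fun i j k l => c k l i j) N M := by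
  simp only [gwForm_apply, mul_right_comm _ (N _ _)]
  exact sum_comm_pairs _

theorem gwForm_isSymm {c : ι → κ → ι → κ → ℝ} (hc : ∀ i j k l, c k l i j = c i j k l) :
    (gwForm c).IsSymm :=
  ⟨fun M N => by simp_rw [gwForm_swap c M N, hc]⟩

variable {δ : Matrix ι κ ℝ}

theorem gwForm_self_eq_zero_of_indep_fourth (hrow : ∀ i, ∑ j, δ i j = 0) (f : ι → κ → ι → ℝ) :
    gwForm (fun i j k _ => f i j k) δ δ = 0 := by
  simp [← mul_sum, hrow]

theorem gwForm_self_eq_zero_of_indep_third (hcol : ∀ j, ∑ i, δ i j = 0) (f : ι → κ → κ → ℝ) :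
    gwForm (fun i j _ l => f i j l) δ δ = 0 := by
  simp only [gwForm_apply]
  refine sum_eq_zero fun i _ => sum_eq_zero fun j _ => ?_
  rw [sum_comm]
  simp [← mul_sum, hcol]

theorem gwForm_self_eq_zero_of_indep_second (hrow : ∀ i, ∑ j, δ i j = 0) (f : ι → ι → κ → ℝ) :
    gwForm (fun i _ k l => f i k l) δ δ = 0 := by
  rw [gwForm_swap]; exact gwForm_self_eq_zero_of_indep_fourth hrow _

theorem gwForm_self_eq_zero_of_indep_first (hcol : ∀ j, ∑ i, δ i j = 0) (f : κ → ι → κ → ℝ) :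
    gwForm (fun _ j k l => f j k l) δ δ = 0 := by
  rw [gwForm_swap]; exact gwForm_self_eq_zero_of_indep_third hcol _

theorem gwForm_sub_sq_self (hrow : ∀ i, ∑ j, δ i j = 0) (hcol : ∀ j, ∑ i, δ i j = 0)
    (a : ι → ι → ℝ) (b : κ → κ → ℝ) :
    gwForm (fun i j k l => (a i k - b j l) ^ 2) δ δ
      = -2 * gwForm (fun i j k l => a i k * b j l) δ δ := by
  have hc : (fun i j k l => (a i k - b j l) ^ 2) = (fun i _ k _ => a i k ^ 2)
      + (fun _ j _ l => b j l ^ 2) + (-2 : ℝ) • fun i j k l => a i k * b j l := by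
    ext; simp only [Pi.add_apply, Pi.smul_apply, smul_eq_mul]; ring
  rw [hc, gwForm_add, gwForm_add, gwForm_smul]
  simp only [LinearMap.add_apply, LinearMap.smul_apply, smul_eq_mul,
    gwForm_self_eq_zero_of_indep_fourth hrow, gwForm_self_eq_zero_of_indep_third hcol]
  ring

theorem gwForm_mul_self_of_eq_add_add_left (hcol : ∀ j, ∑ i, δ i j = 0)
    {a s : ι → ι → ℝ} {u : ι → ℝ} (b : κ → κ → ℝ) (r : ℝ)
    (ha : ∀ i k, a i k = u i + u k + r * s i k) :
    gwForm (fun i j k l => a i k * b j l) δ δ = r * gwForm (fun i j k l => s i k * b j l) δ δ := by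
  have hc : (fun i j k l => a i k * b j l) = (fun i j _ l => u i * b j l)
      + (fun _ j k l => u k * b j l) + r • fun i j k l => s i k * b j l := by
    ext; simp only [Pi.add_apply, Pi.smul_apply, smul_eq_mul, ha]; ring
  rw [hc, gwForm_add, gwForm_add, gwForm_smul]
  simp only [LinearMap.add_apply, LinearMap.smul_apply, smul_eq_mul,
    gwForm_self_eq_zero_of_indep_third hcol, gwForm_self_eq_zero_of_indep_first hcol]
  ring

theorem gwForm_mul_self_of_eq_add_add_right (hrow : ∀ i, ∑ j, δ i j = 0)
    (a : ι → ι → ℝ) {b t : κ → κ → ℝ} {v : κ → ℝ} (r : ℝ)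
    (hb : ∀ j l, b j l = v j + v l + r * t j l) :
    gwForm (fun i j k l => a i k * b j l) δ δ = r * gwForm (fun i j k l => a i k * t j l) δ δ := by
  have hc : (fun i j k l => a i k * b j l) = (fun i j k _ => a i k * v j)
      + (fun i _ k l => a i k * v l) + r • fun i j k l => a i k * t j l := by
    ext; simp only [Pi.add_apply, Pi.smul_apply, smul_eq_mul, hb]; ring
  rw [hc, gwForm_add, gwForm_add, gwForm_smul]
  simp only [LinearMap.add_apply, LinearMap.smul_apply, smul_eq_mul,
    gwForm_self_eq_zero_of_indep_fourth hrow, gwForm_self_eq_zero_of_indep_second hrow]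
  ring

end GWForm

section Euclidean

variable {ι κ E F : Type*} [Fintype ι] [Fintype κ]
  [NormedAddCommGroup E] [InnerProductSpace ℝ E] [NormedAddCommGroup F] [InnerProductSpace ℝ F]

theorem gwForm_inner_mul_inner_self_nonneg (x : ι → E) (y : κ → F) (M : Matrix ι κ ℝ) :
    0 ≤ gwForm (fun i j k l => ⟪x i, x k⟫_ℝ * ⟪y j, y l⟫_ℝ) M M := by
  have hK := (Matrix.posSemidef_gram ℝ x).kronecker (Matrix.posSemidef_gram ℝ y)
  simpa [dotProduct, Matrix.mulVec, Fintype.sum_prod_type, Matrix.kronecker_apply,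
    Matrix.gram_apply, mul_sum, mul_comm, mul_left_comm, mul_assoc] using
    hK.dotProduct_mulVec_nonneg fun p => M p.1 p.2

theorem gwForm_sqDist_self_nonpos (x : ι → E) (y : κ → F) {δ : Matrix ι κ ℝ}
    (hrow : ∀ i, ∑ j, δ i j = 0) (hcol : ∀ j, ∑ i, δ i j = 0) :
    gwForm (fun i j k l => (‖x i - x k‖ ^ 2 - ‖y j - y l‖ ^ 2) ^ 2) δ δ ≤ 0 := by
  have hx (i k : ι) : ‖x i - x k‖ ^ 2 = ‖x i‖ ^ 2 + ‖x k‖ ^ 2 + -2 * ⟪x i, x k⟫_ℝ := by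
    rw [norm_sub_sq_real]; ring
  have hy (j l : κ) : ‖y j - y l‖ ^ 2 = ‖y j‖ ^ 2 + ‖y l‖ ^ 2 + -2 * ⟪y j, y l⟫_ℝ := by
    rw [norm_sub_sq_real]; ring
  rw [gwForm_sub_sq_self hrow hcol, gwForm_mul_self_of_eq_add_add_left hcol _ _ hx,
    gwForm_mul_self_of_eq_add_add_right hrow _ _ hy]
  linarith [gwForm_inner_mul_inner_self_nonneg x y δ]

end Euclidean

theorem gwForm_smul_permMatrix {ι : Type*} [Fintype ι] [DecidableEq ι]
    (c : ι → ι → ι → ι → ℝ) (r : ℝ) (σ : Equiv.Perm ι) :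
    gwForm c (r • σ.permMatrix ℝ) (r • σ.permMatrix ℝ) = r ^ 2 * ∑ i, ∑ k, c i (σ i) k (σ k) := by
  simp [Equiv.Perm.permMatrix, PEquiv.toMatrix_apply, mul_sum, sq, mul_assoc]

def uniformCouplings (n : ℕ) : Set (Matrix (Fin n) (Fin n) ℝ) :=
  {π | (∀ i j, 0 ≤ π i j) ∧ (∀ i, ∑ j, π i j = 1 / n) ∧ ∀ j, ∑ i, π i j = 1 / n}

theorem mem_uniformCouplings_iff_smul_mem_doublyStochastic {n : ℕ} (hn : 0 < n)
    {π : Matrix (Fin n) (Fin n) ℝ} :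
    π ∈ uniformCouplings n ↔ (n : ℝ) • π ∈ doublyStochastic ℝ (Fin n) := by
  have hn' : (0 : ℝ) < n := Nat.cast_pos.2 hn
  simp only [uniformCouplings, Set.mem_ofPred_eq, mem_doublyStochastic_iff_sum, Matrix.smul_apply,
    smul_eq_mul, ← mul_sum, mul_nonneg_iff_of_pos_left hn', eq_div_iff hn'.ne', mul_comm _ (n : ℝ)]

theorem uniformCouplings_eq_convexHull (n : ℕ) :
    uniformCouplings n = convexHull ℝ {(n : ℝ)⁻¹ • σ.permMatrix ℝ | σ : Equiv.Perm (Fin n)} := by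
  rcases Nat.eq_zero_or_pos n with rfl | hn
  · refine Set.eq_of_subset_of_subset (fun π _ => ?_) fun _ _ => by simp [uniformCouplings]
    rw [Subsingleton.elim π ((0 : ℝ)⁻¹ • (1 : Equiv.Perm (Fin 0)).permMatrix ℝ)]
    exact subset_convexHull ℝ _ ⟨1, by simp⟩
  · have hn' : (n : ℝ)⁻¹ ≠ 0 := inv_ne_zero (Nat.cast_pos.2 hn).ne'
    have : uniformCouplings n =
        (n : ℝ)⁻¹ • (doublyStochastic ℝ (Fin n) : Set (Matrix (Fin n) (Fin n) ℝ)) := by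
      ext π
      rw [Set.mem_smul_set_iff_inv_smul_mem₀ hn', inv_inv,
        mem_uniformCouplings_iff_smul_mem_doublyStochastic hn, SetLike.mem_coe]
    rw [this, doublyStochastic_eq_convexHull_permMatrix, ← convexHull_smul]
    exact congrArg _ (Set.smul_set_range _ _)

theorem concaveOn_gwForm_sqDist_uniformCouplings {n : ℕ} {E F : Type*}
    [NormedAddCommGroup E] [InnerProductSpace ℝ E] [NormedAddCommGroup F] [InnerProductSpace ℝ F]
    (x : Fin n → E) (y : Fin n → F) :
    ConcaveOn ℝ (uniformCouplings n)
      fun π => gwForm (fun i j k l => (‖x i - x k‖ ^ 2 - ‖y j - y l‖ ^ 2) ^ 2) π π := by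
  refine (gwForm_isSymm fun i j k l => ?_).concaveOn_apply_self ?_ fun a ha b hb => ?_
  · simp only [norm_sub_rev]
  · exact uniformCouplings_eq_convexHull n ▸ convex_convexHull ℝ _
  · obtain ⟨-, ha_row, ha_col⟩ := ha
    obtain ⟨-, hb_row, hb_col⟩ := hb
    exact gwForm_sqDist_self_nonpos x y (fun i => by simp [sum_sub_distrib, ha_row, hb_row])
      fun j => by simp [sum_sub_distrib, ha_col, hb_col]

theorem gw_eq_gm_euclidean_general (n p q : ℕ)
    (x : Fin n → EuclideanSpace ℝ (Fin p)) (y : Fin n → EuclideanSpace ℝ (Fin q)) :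
    sInf {v : ℝ | ∃ π : Fin n → Fin n → ℝ,
        (∀ i j, 0 ≤ π i j) ∧ (∀ i, ∑ j : Fin n, π i j = 1 / n) ∧
        (∀ j, ∑ i : Fin n, π i j = 1 / n) ∧
        v = ∑ i : Fin n, ∑ j : Fin n, ∑ k : Fin n, ∑ l : Fin n,
              (‖x i - x k‖ ^ 2 - ‖y j - y l‖ ^ 2) ^ 2 * π i j * π k l} =
    sInf {v : ℝ | ∃ σ : Equiv.Perm (Fin n),
        v = (1 / (n : ℝ) ^ 2) *
              ∑ i : Fin n, ∑ k : Fin n, (‖x i - x k‖ ^ 2 - ‖y (σ i) - y (σ k)‖ ^ 2) ^ 2} := by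
  have hcoupl := uniformCouplings_eq_convexHull n
  have hconc := hcoupl ▸ concaveOn_gwForm_sqDist_uniformCouplings x y
  refine csInf_eq_csInf_of_forall_exists_le ?_ ?_
  · rintro _ ⟨π, h0, hrow, hcol, rfl⟩
    have hπ : π ∈ uniformCouplings n := ⟨h0, hrow, hcol⟩
    obtain ⟨_, ⟨σ, rfl⟩, hσ⟩ :=
      hconc.exists_le_of_mem_convexHull (subset_convexHull ℝ _) (hcoupl ▸ hπ)
    rw [gwForm_smul_permMatrix, inv_pow, ← one_div] at hσ
    exact ⟨_, ⟨σ, rfl⟩, hσ⟩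
  · rintro _ ⟨σ, rfl⟩
    obtain ⟨h0, hrow, hcol⟩ : (n : ℝ)⁻¹ • σ.permMatrix ℝ ∈ uniformCouplings n :=
      hcoupl ▸ subset_convexHull ℝ _ ⟨σ, rfl⟩
    refine ⟨_, ⟨_, h0, hrow, hcol, rfl⟩, ?_⟩
    rw [← gwForm_apply, gwForm_smul_permMatrix, inv_pow, one_div]

/-- **Equivalence between GW and GM for discrete measures with squared Euclidean costs.**
For points `x₁,…,xₙ ∈ ℝ^p`, `y₁,…,yₙ ∈ ℝ^q` and uniform weights, the Gromov–Wasserstein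
minimum over couplings `π ∈ Πₙ` (nonnegative matrices whose row and column sums all equal
`1/n`) of `∑ i j k l, (‖x i - x k‖² - ‖y j - y l‖²)² π i j π k l` equals the Gromov–Monge
minimum over permutations of `(1/n²) ∑ i k, (‖x i - x k‖² - ‖y (σ i) - y (σ k)‖²)²`. -/
theorem gw_eq_gm_euclidean (n p q : ℕ) (hn : 0 < n)
    (x : Fin n → EuclideanSpace ℝ (Fin p)) (y : Fin n → EuclideanSpace ℝ (Fin q)) :
    sInf {v : ℝ | ∃ π : Fin n → Fin n → ℝ,
        (∀ i j, 0 ≤ π i j) ∧ (∀ i, ∑ j : Fin n, π i j = 1 / n) ∧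
        (∀ j, ∑ i : Fin n, π i j = 1 / n) ∧
        v = ∑ i : Fin n, ∑ j : Fin n, ∑ k : Fin n, ∑ l : Fin n,
              (‖x i - x k‖ ^ 2 - ‖y j - y l‖ ^ 2) ^ 2 * π i j * π k l} =
    sInf {v : ℝ | ∃ σ : Equiv.Perm (Fin n),
        v = (1 / (n : ℝ) ^ 2) *
              ∑ i : Fin n, ∑ k : Fin n, (‖x i - x k‖ ^ 2 - ‖y (σ i) - y (σ k)‖ ^ 2) ^ 2} :=
  gw_eq_gm_euclidean_general n p q x y
end

section
/- Let μ and ν be probability measures on ℝ^p and let RISGW(μ, ν) = inf over orthogonal matrices Δ ∈ O(p) of SGW_Δ(μ, ν). Then RISGW is rotation invariant: for any orthogonal matrix Q ∈ O(p), RISGW(Q#μ, ν) = RISGW(μ, ν), and likewise RISGW(μ, Q'#ν) = RISGW(μ, ν) for any orthogonal Q' ∈ O(p). -/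
open MeasureTheory Metric
open scoped RealInnerProductSpace ENNReal

noncomputable section

/-- The set of couplings of two measures on `ℝ`: measures on `ℝ × ℝ` whose first and second
marginals are `α` and `β` respectively. -/
def couplings1d (α β : Measure ℝ) : Set (Measure (ℝ × ℝ)) :=
  {γ | γ.map Prod.fst = α ∧ γ.map Prod.snd = β}

/-- The 1D Gromov–Wasserstein value `GW₂²(d², α, β)`: the infimum over couplings `γ` of
`∬ ((s - s')² - (t - t')²)² dγ(s,t) dγ(s',t')`. -/
def GW2sq (α β : Measure ℝ) : ℝ≥0∞ :=
  ⨅ γ ∈ couplings1d α β,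
    ∫⁻ z : (ℝ × ℝ) × (ℝ × ℝ),
      ENNReal.ofReal (((z.1.1 - z.2.1) ^ 2 - (z.1.2 - z.2.2) ^ 2) ^ 2) ∂(γ.prod γ)

/-- The uniform (normalized surface) probability measure `λ_{q-1}` on the unit sphere
`S^{q-1} ⊂ ℝ^q`. -/
def sphereUniform (q : ℕ) : Measure (sphere (0 : EuclideanSpace ℝ (Fin q)) 1) :=
  ((volume : Measure (EuclideanSpace ℝ (Fin q))).toSphere Set.univ)⁻¹ •
    (volume : Measure (EuclideanSpace ℝ (Fin q))).toSphere

/-- The Sliced Gromov–Wasserstein discrepancy `SGW_Δ(μ, ν)`: the average over uniformly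
distributed directions `θ ∈ S^{q-1}` of `GW₂²(d², P_θ#(Δ#μ), P_θ#ν)`, where
`P_θ : x ↦ ⟨x, θ⟩`. -/
def SGW {p q : ℕ} (Δ : EuclideanSpace ℝ (Fin p) →ₗ[ℝ] EuclideanSpace ℝ (Fin q))
    (μ : Measure (EuclideanSpace ℝ (Fin p)))
    (ν : Measure (EuclideanSpace ℝ (Fin q))) : ℝ≥0∞ :=
  ∫⁻ θ : sphere (0 : EuclideanSpace ℝ (Fin q)) 1,
    GW2sq ((μ.map Δ).map (fun x => ⟪x, (θ : EuclideanSpace ℝ (Fin q))⟫))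
      (ν.map (fun y => ⟪y, (θ : EuclideanSpace ℝ (Fin q))⟫)) ∂(sphereUniform q)

/-- The Rotation Invariant Sliced Gromov–Wasserstein: the infimum of `SGW_Δ(μ, ν)` over all
orthogonal maps `Δ ∈ O(p)` (identified with the linear isometric equivalences of `ℝ^p`). -/
def RISGW {p : ℕ} (μ ν : Measure (EuclideanSpace ℝ (Fin p))) : ℝ≥0∞ :=
  ⨅ Δ : EuclideanSpace ℝ (Fin p) ≃ₗᵢ[ℝ] EuclideanSpace ℝ (Fin p),
    SGW Δ.toLinearEquiv.toLinearMap μ ν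

/-! Composing with `Q` on the left reparametrises the infimum over `O(p)` by `Δ ↦ Δ Q`. On the
right, `⟪Q' y, θ⟫ = ⟪y, Q'⁻¹ θ⟫` moves `Q'` onto the directions, and the uniform measure on the
sphere is invariant under `Q'⁻¹` (because Lebesgue measure is), so
`SGW_Δ(μ, Q'#ν) = SGW_{Q'⁻¹ Δ}(μ, ν)`, again a reparametrisation of `O(p)`. -/

open scoped Pointwise

theorem LinearEquiv.preimage_set_smul {R E F : Type*} [Semiring R] [AddCommMonoid E]
    [Module R E] [AddCommMonoid F] [Module R F] (f : E ≃ₗ[R] F) (s : Set R) (t : Set F) :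
    f ⁻¹' (s • t) = s • f ⁻¹' t := by
  rw [← f.image_symm_eq_preimage, ← f.image_symm_eq_preimage, ← Set.image2_smul,
    ← Set.image2_smul, Set.image_image2_distrib_right]
  exact fun a b => map_smul _ a b

section SphereInvariance

variable {E : Type*} [NormedAddCommGroup E] [NormedSpace ℝ E]

def LinearIsometryEquiv.sphereHomeomorph (Q : E ≃ₗᵢ[ℝ] E) :
    sphere (0 : E) 1 ≃ₜ sphere (0 : E) 1 :=
  Q.toHomeomorph.subtype fun x => by simp

theorem LinearIsometryEquiv.image_val_preimage_sphereHomeomorph (Q : E ≃ₗᵢ[ℝ] E)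
    (s : Set (sphere (0 : E) 1)) :
    Subtype.val '' (Q.sphereHomeomorph ⁻¹' s) = Q ⁻¹' (Subtype.val '' s) := by
  rw [← Q.sphereHomeomorph.image_symm, Set.image_image, ← Q.symm_symm,
    ← Q.symm.image_eq_preimage_symm, Set.image_image]
  rfl

variable [MeasurableSpace E] [BorelSpace E]

/- `μ.toSphere s` is `dim E * μ` of the open cone `Ioo 0 1 • s`, and `Q` maps cones to cones. -/
theorem LinearIsometryEquiv.measurePreserving_sphereHomeomorph_toSphere (Q : E ≃ₗᵢ[ℝ] E)
    {μ : Measure E} (hQ : MeasurePreserving Q μ μ) :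
    MeasurePreserving Q.sphereHomeomorph μ.toSphere μ.toSphere := by
  refine ⟨Q.sphereHomeomorph.continuous.measurable, Measure.ext fun s hs => ?_⟩
  rw [Measure.map_apply Q.sphereHomeomorph.continuous.measurable hs,
    μ.toSphere_apply' (Q.sphereHomeomorph.continuous.measurable hs), μ.toSphere_apply' hs,
    Q.image_val_preimage_sphereHomeomorph, ← Q.coe_toLinearEquiv,
    ← Q.toLinearEquiv.preimage_set_smul, Q.coe_toLinearEquiv,
    hQ.measure_preimage_emb Q.toHomeomorph.measurableEmbedding]

end SphereInvariance

theorem MeasureTheory.Measure.map_inner_map_linearIsometryEquiv {E : Type*} [NormedAddCommGroup E]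
    [InnerProductSpace ℝ E] [MeasurableSpace E] [BorelSpace E] (ν : Measure E)
    (Q : E ≃ₗᵢ[ℝ] E) (θ : E) :
    (ν.map Q).map (fun y => ⟪y, Q θ⟫) = ν.map (fun y => ⟪y, θ⟫) := by
  rw [Measure.map_map (by fun_prop) Q.continuous.measurable]
  simp_rw [Function.comp_def, Q.inner_map_map]

section SlicedGromovWasserstein

variable {p q r : ℕ}

theorem measurePreserving_sphereHomeomorph_sphereUniform
    (Q : EuclideanSpace ℝ (Fin q) ≃ₗᵢ[ℝ] EuclideanSpace ℝ (Fin q)) :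
    MeasurePreserving Q.sphereHomeomorph (sphereUniform q) (sphereUniform q) :=
  (Q.measurePreserving_sphereHomeomorph_toSphere Q.measurePreserving).smul_measure _

theorem SGW_map_left (Δ : EuclideanSpace ℝ (Fin p) →ₗ[ℝ] EuclideanSpace ℝ (Fin q))
    (L : EuclideanSpace ℝ (Fin r) →ₗ[ℝ] EuclideanSpace ℝ (Fin p))
    (μ : Measure (EuclideanSpace ℝ (Fin r))) (ν : Measure (EuclideanSpace ℝ (Fin q))) :
    SGW Δ (μ.map L) ν = SGW (Δ ∘ₗ L) μ ν := by
  rw [SGW, SGW, Measure.map_map Δ.continuous_of_finiteDimensional.measurable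
    L.continuous_of_finiteDimensional.measurable]
  rfl

theorem SGW_map_right (Δ : EuclideanSpace ℝ (Fin p) →ₗ[ℝ] EuclideanSpace ℝ (Fin q))
    (Q : EuclideanSpace ℝ (Fin q) ≃ₗᵢ[ℝ] EuclideanSpace ℝ (Fin q))
    (μ : Measure (EuclideanSpace ℝ (Fin p))) (ν : Measure (EuclideanSpace ℝ (Fin q))) :
    SGW Δ μ (ν.map Q) = SGW (Q.symm.toLinearEquiv.toLinearMap ∘ₗ Δ) μ ν := by
  have hΔ : μ.map Δ = (μ.map (Q.symm.toLinearEquiv.toLinearMap ∘ₗ Δ)).map Q := by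
    rw [Measure.map_map Q.continuous.measurable
      (LinearMap.continuous_of_finiteDimensional _).measurable]
    congr 1
    ext x
    simp
  rw [SGW, ← (measurePreserving_sphereHomeomorph_sphereUniform Q).lintegral_comp_emb
    Q.sphereHomeomorph.measurableEmbedding]
  refine lintegral_congr fun θ => ?_
  rw [hΔ]
  exact congrArg₂ GW2sq (Measure.map_inner_map_linearIsometryEquiv _ Q θ)
    (ν.map_inner_map_linearIsometryEquiv Q θ)

theorem RISGW_map_left (μ ν : Measure (EuclideanSpace ℝ (Fin p)))
    (Q : EuclideanSpace ℝ (Fin p) ≃ₗᵢ[ℝ] EuclideanSpace ℝ (Fin p)) :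
    RISGW (μ.map Q) ν = RISGW μ ν := by
  have hSGW (Δ : EuclideanSpace ℝ (Fin p) ≃ₗᵢ[ℝ] EuclideanSpace ℝ (Fin p)) :
      SGW Δ.toLinearEquiv.toLinearMap (μ.map Q) ν =
        SGW (Δ * Q).toLinearEquiv.toLinearMap μ ν := by
    rw [← Q.coe_toLinearEquiv, ← LinearEquiv.coe_coe, SGW_map_left]
    congr 1
  simp only [RISGW, hSGW]
  simpa only [Equiv.coe_mulRight] using
    (Equiv.mulRight Q).iInf_comp (g := fun Δ => SGW Δ.toLinearEquiv.toLinearMap μ ν)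

theorem RISGW_map_right (μ ν : Measure (EuclideanSpace ℝ (Fin p)))
    (Q : EuclideanSpace ℝ (Fin p) ≃ₗᵢ[ℝ] EuclideanSpace ℝ (Fin p)) :
    RISGW μ (ν.map Q) = RISGW μ ν := by
  have hSGW (Δ : EuclideanSpace ℝ (Fin p) ≃ₗᵢ[ℝ] EuclideanSpace ℝ (Fin p)) :
      SGW Δ.toLinearEquiv.toLinearMap μ (ν.map Q) =
        SGW (Q⁻¹ * Δ).toLinearEquiv.toLinearMap μ ν := by
    rw [SGW_map_right]
    congr 1
  simp only [RISGW, hSGW]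
  simpa only [Equiv.coe_mulLeft] using
    (Equiv.mulLeft Q⁻¹).iInf_comp (g := fun Δ => SGW Δ.toLinearEquiv.toLinearMap μ ν)

end SlicedGromovWasserstein

theorem risgw_rotation_invariant_general {p : ℕ}
    (μ ν : Measure (EuclideanSpace ℝ (Fin p)))
    (Q Q' : EuclideanSpace ℝ (Fin p) ≃ₗᵢ[ℝ] EuclideanSpace ℝ (Fin p)) :
    RISGW (μ.map Q) ν = RISGW μ ν ∧ RISGW μ (ν.map Q') = RISGW μ ν :=
  ⟨RISGW_map_left μ ν Q, RISGW_map_right μ ν Q'⟩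

/-- **`RISGW` is rotation invariant**: for probability measures `μ, ν` on `ℝ^p` and any
orthogonal maps `Q, Q' ∈ O(p)`, `RISGW(Q#μ, ν) = RISGW(μ, ν)` and
`RISGW(μ, Q'#ν) = RISGW(μ, ν)`. -/
theorem risgw_rotation_invariant {p : ℕ}
    (μ ν : Measure (EuclideanSpace ℝ (Fin p)))
    [IsProbabilityMeasure μ] [IsProbabilityMeasure ν]
    (Q Q' : EuclideanSpace ℝ (Fin p) ≃ₗᵢ[ℝ] EuclideanSpace ℝ (Fin p)) :
    RISGW (μ.map Q) ν = RISGW μ ν ∧ RISGW μ (ν.map Q') = RISGW μ ν :=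
  risgw_rotation_invariant_general μ ν Q Q'
end
end

section
/- Let x₁,…,xₙ ∈ ℝ^p be pairwise distinct points with weights a₁,…,aₙ > 0 summing to 1, and y₁,…,y_m ∈ ℝ^q pairwise distinct points with weights b₁,…,b_m > 0 summing to 1. Let Π(a,b) be the set of n×m matrices with nonnegative entries whose i-th row sums to a_i and j-th column sums to b_j. Then min over π ∈ Π(a,b) of ∑_{i,j,k,l} (‖x_i − x_k‖² − ‖y_j − y_l‖²)² π_{ij} π_{kl} = 0 if and only if there exists a surjective map f : {1,…,n} → {1,…,m} such that for every j, b_j = ∑_{i : f(i) = j} a_i, and for all i, k, ‖y_{f(i)} − y_{f(k)}‖ = ‖x_i − x_k‖ (Euclidean norms in ℝ^q and ℝ^p respectively). That is, the Gromov-Wasserstein distance with squared Euclidean costs vanishes if and only if there exists a measure-preserving isometry between the supports. -/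
open Finset

private lemma sum_zero_forall {α : Type*} [Fintype α] {g : α → ℝ}
    (hg : ∀ i, 0 ≤ g i) (h : ∑ i, g i = 0) : ∀ i, g i = 0 := by
  intro i
  exact (Finset.sum_eq_zero_iff_of_nonneg (fun i _ => hg i)).mp h i (mem_univ i)

/-- **The Gromov–Wasserstein distance with squared Euclidean costs vanishes iff there is a
measure-preserving isometry between the supports.** For discrete measures
`μ = ∑ aᵢ δ_{xᵢ}` on `ℝ^p` and `ν = ∑ bⱼ δ_{yⱼ}` on `ℝ^q` (pairwise distinct points,
positive weights summing to one), the minimum over couplings `π ∈ Π(a,b)` of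
`∑ i j k l, (‖x i - x k‖² - ‖y j - y l‖²)² π i j π k l` is `0` iff there exists a
surjective `f` pushing the weights `a` to `b` and preserving pairwise distances. -/
theorem gw_vanishes_iff_isomorphic (n m p q : ℕ)
    (x : Fin n → EuclideanSpace ℝ (Fin p)) (hx : Function.Injective x)
    (y : Fin m → EuclideanSpace ℝ (Fin q)) (hy : Function.Injective y)
    (a : Fin n → ℝ) (ha : ∀ i, 0 < a i) (hsa : ∑ i : Fin n, a i = 1)
    (b : Fin m → ℝ) (hb : ∀ j, 0 < b j) (hsb : ∑ j : Fin m, b j = 1) :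
    sInf {v : ℝ | ∃ π : Fin n → Fin m → ℝ,
        (∀ i j, 0 ≤ π i j) ∧ (∀ i, ∑ j : Fin m, π i j = a i) ∧
        (∀ j, ∑ i : Fin n, π i j = b j) ∧
        v = ∑ i : Fin n, ∑ j : Fin m, ∑ k : Fin n, ∑ l : Fin m,
              (‖x i - x k‖ ^ 2 - ‖y j - y l‖ ^ 2) ^ 2 * π i j * π k l} = 0 ↔
    ∃ f : Fin n → Fin m, Function.Surjective f ∧
      (∀ j, b j = ∑ i ∈ Finset.univ.filter (fun i => f i = j), a i) ∧
      (∀ i k, ‖y (f i) - y (f k)‖ = ‖x i - x k‖) := by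
  classical
  set c : (Fin n → Fin m → ℝ) → ℝ := fun π =>
    ∑ i : Fin n, ∑ j : Fin m, ∑ k : Fin n, ∑ l : Fin m,
      (‖x i - x k‖ ^ 2 - ‖y j - y l‖ ^ 2) ^ 2 * π i j * π k l with hc
  set K : Set (Fin n → Fin m → ℝ) :=
    {π | (∀ i j, 0 ≤ π i j) ∧ (∀ i, ∑ j : Fin m, π i j = a i) ∧
      (∀ j, ∑ i : Fin n, π i j = b j)} with hKdef
  have hS : {v : ℝ | ∃ π : Fin n → Fin m → ℝ,
        (∀ i j, 0 ≤ π i j) ∧ (∀ i, ∑ j : Fin m, π i j = a i) ∧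
        (∀ j, ∑ i : Fin n, π i j = b j) ∧
        v = ∑ i : Fin n, ∑ j : Fin m, ∑ k : Fin n, ∑ l : Fin m,
              (‖x i - x k‖ ^ 2 - ‖y j - y l‖ ^ 2) ^ 2 * π i j * π k l} = c '' K := by
    ext v
    constructor
    · rintro ⟨π, h1, h2, h3, h4⟩
      exact ⟨π, ⟨h1, h2, h3⟩, h4.symm⟩
    · rintro ⟨π, ⟨h1, h2, h3⟩, h4⟩
      exact ⟨π, h1, h2, h3, h4.symm⟩
  rw [hS]
  have heval : ∀ (i : Fin n) (j : Fin m),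
      Continuous fun π : Fin n → Fin m → ℝ => π i j :=
    fun i j => (continuous_apply j).comp (continuous_apply i)
  -- lower bound on elements of the image
  have hlb : ∀ v ∈ c '' K, (0 : ℝ) ≤ v := by
    rintro v ⟨π, ⟨h1, -, -⟩, rfl⟩
    refine Finset.sum_nonneg fun i _ => Finset.sum_nonneg fun j _ =>
      Finset.sum_nonneg fun k _ => Finset.sum_nonneg fun l _ => ?_
    exact mul_nonneg (mul_nonneg (sq_nonneg _) (h1 i j)) (h1 k l)
  constructor
  · -- forward direction
    intro hinf
    -- K is compact
    have hcl : IsClosed K := by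
      have : K = (⋂ i, ⋂ j, {π : Fin n → Fin m → ℝ | 0 ≤ π i j}) ∩
          ((⋂ i, {π : Fin n → Fin m → ℝ | ∑ j : Fin m, π i j = a i}) ∩
           (⋂ j, {π : Fin n → Fin m → ℝ | ∑ i : Fin n, π i j = b j})) := by
        ext π
        simp [hKdef, Set.mem_iInter]
      rw [this]
      refine IsClosed.inter ?_ (IsClosed.inter ?_ ?_)
      · exact isClosed_iInter fun i => isClosed_iInter fun j =>
          isClosed_le continuous_const (heval i j)
      · exact isClosed_iInter fun i => isClosed_eq
          (continuous_finset_sum _ fun j _ => heval i j) continuous_const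
      · exact isClosed_iInter fun j => isClosed_eq
          (continuous_finset_sum _ fun i _ => heval i j) continuous_const
    have hbd : K ⊆ Metric.closedBall 0 1 := by
      rintro π ⟨h1, h2, -⟩
      rw [Metric.mem_closedBall, dist_zero_right]
      refine (pi_norm_le_iff_of_nonneg zero_le_one).mpr fun i => ?_
      refine (pi_norm_le_iff_of_nonneg zero_le_one).mpr fun j => ?_
      rw [Real.norm_eq_abs, abs_of_nonneg (h1 i j)]
      calc π i j ≤ ∑ j' : Fin m, π i j' :=
              Finset.single_le_sum (fun j' _ => h1 i j') (mem_univ j)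
        _ = a i := h2 i
        _ ≤ ∑ i' : Fin n, a i' :=
              Finset.single_le_sum (fun i' _ => (ha i').le) (mem_univ i)
        _ = 1 := hsa
    have hKc : IsCompact K := (isCompact_closedBall 0 1).of_isClosed_subset hcl hbd
    have hKne : K.Nonempty := by
      refine ⟨fun i j => a i * b j, fun i j => mul_nonneg (ha i).le (hb j).le,
        fun i => ?_, fun j => ?_⟩
      · rw [← Finset.mul_sum, hsb, mul_one]
      · rw [← Finset.sum_mul, hsa, one_mul]
    have hcc : Continuous c := by
      refine continuous_finset_sum _ fun i _ => continuous_finset_sum _ fun j _ =>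
        continuous_finset_sum _ fun k _ => continuous_finset_sum _ fun l _ => ?_
      exact (continuous_const.mul (heval i j)).mul (heval k l)
    have hmem : sInf (c '' K) ∈ c '' K := (hKc.image hcc).sInf_mem (hKne.image c)
    rw [hinf] at hmem
    obtain ⟨π, ⟨hpos, hrow, hcol⟩, hπ0⟩ := hmem
    -- each term vanishes
    have hnn : ∀ (i : Fin n) (j : Fin m) (k : Fin n) (l : Fin m),
        0 ≤ (‖x i - x k‖ ^ 2 - ‖y j - y l‖ ^ 2) ^ 2 * π i j * π k l :=
      fun i j k l => mul_nonneg (mul_nonneg (sq_nonneg _) (hpos i j)) (hpos k l)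
    have hterm : ∀ (i : Fin n) (j : Fin m) (k : Fin n) (l : Fin m),
        (‖x i - x k‖ ^ 2 - ‖y j - y l‖ ^ 2) ^ 2 * π i j * π k l = 0 := by
      intro i j k l
      have h1 := sum_zero_forall (g := fun i => ∑ j : Fin m, ∑ k : Fin n, ∑ l : Fin m,
          (‖x i - x k‖ ^ 2 - ‖y j - y l‖ ^ 2) ^ 2 * π i j * π k l)
        (fun i => Finset.sum_nonneg fun j _ => Finset.sum_nonneg fun k _ =>
          Finset.sum_nonneg fun l _ => hnn i j k l) hπ0 i
      have h2 := sum_zero_forall (fun j => Finset.sum_nonneg fun k _ =>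
          Finset.sum_nonneg fun l _ => hnn i j k l) h1 j
      have h3 := sum_zero_forall (fun k => Finset.sum_nonneg fun l _ => hnn i j k l) h2 k
      exact sum_zero_forall (fun l => hnn i j k l) h3 l
    have key : ∀ (i : Fin n) (j : Fin m) (k : Fin n) (l : Fin m),
        π i j ≠ 0 → π k l ≠ 0 → ‖x i - x k‖ ^ 2 = ‖y j - y l‖ ^ 2 := by
      intro i j k l h1 h2
      have h3 := hterm i j k l
      have h4 : (‖x i - x k‖ ^ 2 - ‖y j - y l‖ ^ 2) ^ 2 * π i j = 0 :=
        (mul_eq_zero.mp h3).resolve_right h2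
      have h5 : (‖x i - x k‖ ^ 2 - ‖y j - y l‖ ^ 2) ^ 2 = 0 :=
        (mul_eq_zero.mp h4).resolve_right h1
      have h6 := (pow_eq_zero_iff two_ne_zero).mp h5
      linarith [h6]
    have hex : ∀ i, ∃ j, π i j ≠ 0 := by
      intro i
      by_contra hcon
      push_neg at hcon
      have : ∑ j : Fin m, π i j = 0 := Finset.sum_eq_zero fun j _ => hcon j
      rw [hrow i] at this
      exact (ha i).ne' this
    choose f hf using hex
    have huniq : ∀ i j, π i j ≠ 0 → j = f i := by
      intro i j hne
      have hk := key i j i (f i) hne (hf i)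
      have h0 : ‖y j - y (f i)‖ ^ 2 = 0 := by
        rw [← hk]
        simp
      have := (pow_eq_zero_iff two_ne_zero).mp h0
      rw [norm_eq_zero, sub_eq_zero] at this
      exact hy this
    have hπeq : ∀ i j, π i j = if f i = j then a i else 0 := by
      intro i j
      split_ifs with h
      · subst h
        rw [← hrow i]
        rw [Finset.sum_eq_single (f i)]
        · intro j' _ hj'
          by_contra hne
          exact hj' (huniq i j' hne)
        · intro habs
          exact absurd (mem_univ (f i)) habs
      · by_contra hne
        exact h ((huniq i j hne).symm)
    refine ⟨f, ?_, ?_, ?_⟩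
    · intro j
      have hbj : ∑ i : Fin n, π i j ≠ 0 := by rw [hcol j]; exact (hb j).ne'
      obtain ⟨i, _, hi⟩ := Finset.exists_ne_zero_of_sum_ne_zero hbj
      exact ⟨i, (huniq i j hi).symm⟩
    · intro j
      conv_lhs => rw [← hcol j]
      rw [Finset.sum_filter]
      exact Finset.sum_congr rfl fun i _ => hπeq i j
    · intro i k
      have hk := key i (f i) k (f k) (hf i) (hf k)
      rw [← Real.sqrt_sq (norm_nonneg (y (f i) - y (f k))),
        ← Real.sqrt_sq (norm_nonneg (x i - x k)), hk]
  · -- backward direction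
    rintro ⟨f, hsurj, hw, hd⟩
    set π : Fin n → Fin m → ℝ := fun i j => if f i = j then a i else 0 with hπdef
    have hmem : (0 : ℝ) ∈ c '' K := by
      refine ⟨π, ⟨?_, ?_, ?_⟩, ?_⟩
      · intro i j
        simp only [hπdef]
        split_ifs
        · exact (ha i).le
        · exact le_refl 0
      · intro i
        rw [show (∑ j : Fin m, π i j) = ∑ j : Fin m, if f i = j then a i else 0 from rfl,
          Finset.sum_ite_eq]
        simp
      · intro j
        calc ∑ i : Fin n, π i j = ∑ i : Fin n, if f i = j then a i else 0 := rfl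
          _ = ∑ i ∈ Finset.univ.filter (fun i => f i = j), a i :=
                (Finset.sum_filter _ _).symm
          _ = b j := (hw j).symm
      · refine Finset.sum_eq_zero fun i _ => Finset.sum_eq_zero fun j _ =>
          Finset.sum_eq_zero fun k _ => Finset.sum_eq_zero fun l _ => ?_
        by_cases h1 : f i = j
        · by_cases h2 : f k = l
          · subst h1; subst h2
            rw [← hd i k]
            ring
          · simp [hπdef, h2]
        · simp [hπdef, h1]
    refine le_antisymm (csInf_le ⟨0, fun v hv => hlb v hv⟩ hmem)
      (le_csInf ⟨0, hmem⟩ hlb)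
end

section
/- For any x, y ∈ ℝⁿ and any permutation σ of {1,…,n}, one has the identity ∑_{i,j=1}^n ((x_i − x_j)² − (y_{σ(i)} − y_{σ(j)})²)² = 2n∑_i x_i⁴ − 8(∑_i x_i³)(∑_i x_i) + 6(∑_i x_i²)² + 2n∑_i y_i⁴ − 8(∑_i y_i³)(∑_i y_i) + 6(∑_i y_i²)² − 4(∑_i x_i²)(∑_i y_i²) − 4n∑_i x_i² y_{σ(i)}² + 8[(∑_i x_i)(∑_i x_i y_{σ(i)}²) + (∑_i y_i)(∑_i x_i² y_{σ(i)})] − 8(∑_i x_i y_{σ(i)})². In particular, once the permutation σ is known, this cost can be evaluated using O(n) arithmetic operations. -/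
open Finset

lemma key (n : ℕ) (a b : Fin n → ℝ) :
    ∑ i : Fin n, ∑ j : Fin n, ((a i - a j) ^ 2 - (b i - b j) ^ 2) ^ 2 =
      2 * n * (∑ i : Fin n, (a i) ^ 4)
        - 8 * (∑ i : Fin n, (a i) ^ 3) * (∑ i : Fin n, a i)
        + 6 * (∑ i : Fin n, (a i) ^ 2) ^ 2
        + 2 * n * (∑ i : Fin n, (b i) ^ 4)
        - 8 * (∑ i : Fin n, (b i) ^ 3) * (∑ i : Fin n, b i)
        + 6 * (∑ i : Fin n, (b i) ^ 2) ^ 2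
        - 4 * (∑ i : Fin n, (a i) ^ 2) * (∑ i : Fin n, (b i) ^ 2)
        - 4 * n * (∑ i : Fin n, (a i) ^ 2 * (b i) ^ 2)
        + 8 * ((∑ i : Fin n, a i) * (∑ i : Fin n, a i * (b i) ^ 2)
            + (∑ i : Fin n, b i) * (∑ i : Fin n, (a i) ^ 2 * b i))
        - 8 * (∑ i : Fin n, a i * b i) ^ 2 := by
  have hn : ∀ f : Fin n → ℝ, (n : ℝ) * ∑ i, f i = ∑ _i : Fin n, ∑ j, f j := fun f => by
    rw [Finset.sum_const, card_univ, Fintype.card_fin, nsmul_eq_mul]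
  have hmul : ∀ f g : Fin n → ℝ, (∑ i, f i) * (∑ i, g i) = ∑ i, ∑ j, f i * g j :=
    fun f g => Finset.sum_mul_sum _ _ _ _
  have hsq : ∀ f : Fin n → ℝ, (∑ i, f i) ^ 2 = ∑ i, ∑ j, f i * f j := fun f => by
    rw [sq, hmul]
  rw [mul_assoc (2:ℝ) (n:ℝ), mul_assoc (2:ℝ) (n:ℝ), mul_assoc (4:ℝ) (n:ℝ), hn, hn, hn,
    mul_assoc (8:ℝ), mul_assoc (8:ℝ), hmul, hmul, hsq, hsq, hsq, hmul, hmul, mul_assoc (4:ℝ), hmul]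
  have key0 : ∀ F : Fin n → Fin n → ℝ, (∀ i j, F i j + F j i = 0) →
      ∑ i, ∑ j, F i j = 0 := by
    intro F h
    have h2 : (∑ i, ∑ j, F i j) + (∑ i, ∑ j, F j i) = 0 := by
      simp only [← Finset.sum_add_distrib]
      simp [h]
    rw [show (∑ i, ∑ j, F j i) = ∑ i, ∑ j, F i j from Finset.sum_comm] at h2
    linarith
  rw [← sub_eq_zero]
  simp only [Finset.mul_sum, ← Finset.sum_add_distrib, ← Finset.sum_sub_distrib]
  exact key0 _ fun i j => by ring

/-- **Binomial expansion of the Gromov–Monge cost in 1D.** For any `x, y ∈ ℝⁿ` and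
permutation `σ`, the cost `∑ᵢⱼ ((xᵢ - xⱼ)² - (y_{σ(i)} - y_{σ(j)})²)²` expands into a
combination of `O(n)`-computable sums. -/
theorem gm_cost_expansion (n : ℕ) (x y : Fin n → ℝ) (σ : Equiv.Perm (Fin n)) :
    ∑ i : Fin n, ∑ j : Fin n, ((x i - x j) ^ 2 - (y (σ i) - y (σ j)) ^ 2) ^ 2 =
      2 * n * (∑ i : Fin n, (x i) ^ 4)
        - 8 * (∑ i : Fin n, (x i) ^ 3) * (∑ i : Fin n, x i)
        + 6 * (∑ i : Fin n, (x i) ^ 2) ^ 2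
        + 2 * n * (∑ i : Fin n, (y i) ^ 4)
        - 8 * (∑ i : Fin n, (y i) ^ 3) * (∑ i : Fin n, y i)
        + 6 * (∑ i : Fin n, (y i) ^ 2) ^ 2
        - 4 * (∑ i : Fin n, (x i) ^ 2) * (∑ i : Fin n, (y i) ^ 2)
        - 4 * n * (∑ i : Fin n, (x i) ^ 2 * (y (σ i)) ^ 2)
        + 8 * ((∑ i : Fin n, x i) * (∑ i : Fin n, x i * (y (σ i)) ^ 2)
            + (∑ i : Fin n, y i) * (∑ i : Fin n, (x i) ^ 2 * y (σ i)))
        - 8 * (∑ i : Fin n, x i * y (σ i)) ^ 2 := by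
  rw [← Equiv.sum_comp σ (fun i => y i ^ 4), ← Equiv.sum_comp σ (fun i => y i ^ 3),
    ← Equiv.sum_comp σ (fun i => y i ^ 2), ← Equiv.sum_comp σ (fun i => y i)]
  exact key n x (fun i => y (σ i))
end

section
/- Let x₁ < x₂ < ⋯ < xₙ and y₁ < y₂ < ⋯ < yₙ be strictly increasing real numbers. Then the identity matrix Iₙ is the unique maximizer over DS of the linear functional π ↦ ∑_{i,j=1}^n x_i y_j π_{ij}, and the anti-identity permutation matrix Jₙ (the permutation matrix of σ(i) = n + 1 − i) is its unique minimizer over DS. -/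
open Finset

def DSset (n : ℕ) : Set (Fin n → Fin n → ℝ) :=
  {π | (∀ i j, 0 ≤ π i j) ∧ (∀ i, ∑ j : Fin n, π i j = 1) ∧ (∀ j, ∑ i : Fin n, π i j = 1)}

def permMat (n : ℕ) (σ : Equiv.Perm (Fin n)) : Fin n → Fin n → ℝ :=
  fun i j => if j = σ i then 1 else 0

lemma permMat_mem_DSset (n : ℕ) (σ : Equiv.Perm (Fin n)) : permMat n σ ∈ DSset n := by
  refine ⟨fun i j => by unfold permMat; positivity, fun i => ?_, fun j => ?_⟩
  · simp [permMat]
  · have : ∀ i : Fin n, permMat n σ i j = if i = σ.symm j then 1 else 0 := by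
      intro i
      simp only [permMat]
      refine if_congr ?_ rfl rfl
      rw [eq_comm, Equiv.apply_eq_iff_eq_symm_apply]
    simp [this]

lemma sum_permMat (n : ℕ) (x y : Fin n → ℝ) (σ : Equiv.Perm (Fin n)) :
    ∑ i : Fin n, ∑ j : Fin n, x i * y j * permMat n σ i j = ∑ i : Fin n, x i * y (σ i) := by
  refine Finset.sum_congr rfl fun i _ => ?_
  simp [permMat, mul_ite]

lemma strictMono_monovary {n : ℕ} {x y : Fin n → ℝ} (hx : StrictMono x) (hy : StrictMono y) :
    Monovary x y := fun i j h => hx.le_iff_le.2 (hy.lt_iff_lt.1 h).le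

lemma not_monovary_comp {n : ℕ} {x y : Fin n → ℝ} (hx : StrictMono x) (hy : StrictMono y)
    (σ : Equiv.Perm (Fin n)) (hσ : σ ≠ Equiv.refl (Fin n)) : ¬ Monovary x (y ∘ σ) := by
  intro hmono
  apply hσ
  have hkey : ∀ i j : Fin n, σ i < σ j → i ≤ j := by
    intro i j h
    exact hx.le_iff_le.1 (hmono (by simpa using hy h))
  have hsm : StrictMono (σ : Fin n → Fin n) := by
    intro i j hij
    rcases lt_trichotomy (σ i) (σ j) with h | h | h
    · exact h
    · exact absurd (σ.injective h) hij.ne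
    · exact absurd (hkey _ _ h) (not_le.2 hij)
  have hr : Set.range (σ : Fin n → Fin n) = Set.range (id : Fin n → Fin n) := by
    simp [σ.surjective.range_eq, Set.range_id]
  have inst : WellFoundedLT (Fin n) := inferInstance
  have h2 : (σ : Fin n → Fin n) = (id : Fin n → Fin n) :=
    (@StrictMono.range_inj (Fin n) (Fin n) _ _ inst _ _ hsm strictMono_id).1 hr
  exact Equiv.ext fun i => congrFun h2 i

/-- Core strict inequality: any doubly stochastic matrix other than the identity gives a
strictly smaller value. -/
lemma key_lt (n : ℕ) (x y : Fin n → ℝ) (hx : StrictMono x) (hy : StrictMono y)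
    (π : Fin n → Fin n → ℝ) (hπ : π ∈ DSset n) (hne : π ≠ permMat n (Equiv.refl (Fin n))) :
    ∑ i : Fin n, ∑ j : Fin n, x i * y j * π i j < ∑ i : Fin n, x i * y i := by
  have hM : (Matrix.of π) ∈ doublyStochastic ℝ (Fin n) := by
    rw [mem_doublyStochastic_iff_sum]
    exact hπ
  obtain ⟨w, hw0, hw1, hwM⟩ := exists_eq_sum_perm_of_mem_doublyStochastic hM
  have hEntry : ∀ i j, π i j = ∑ σ : Equiv.Perm (Fin n), w σ * permMat n σ i j := by
    intro i j
    have h := Matrix.ext_iff.2 hwM i j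
    simp only [Matrix.sum_apply, Matrix.smul_apply, smul_eq_mul, Matrix.of_apply] at h
    rw [← h]
    refine Finset.sum_congr rfl fun σ _ => ?_
    simp [Equiv.Perm.permMatrix, PEquiv.toMatrix_apply, Equiv.toPEquiv_apply, permMat, eq_comm]
  have hswap : ∑ i : Fin n, ∑ j : Fin n, x i * y j * π i j
      = ∑ σ : Equiv.Perm (Fin n), w σ * ∑ i : Fin n, x i * y (σ i) := by
    rw [eq_comm]
    simp_rw [← sum_permMat n x y, Finset.mul_sum]
    rw [Finset.sum_comm]
    refine Finset.sum_congr rfl fun i _ => ?_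
    rw [Finset.sum_comm]
    refine Finset.sum_congr rfl fun j _ => ?_
    rw [hEntry i j, Finset.mul_sum]
    exact Finset.sum_congr rfl fun σ _ => by ring
  -- find a non-identity permutation with positive weight
  have hex : ∃ σ₀ : Equiv.Perm (Fin n), σ₀ ≠ Equiv.refl (Fin n) ∧ 0 < w σ₀ := by
    by_contra hcon
    push_neg at hcon
    have hzero : ∀ σ : Equiv.Perm (Fin n), σ ≠ Equiv.refl (Fin n) → w σ = 0 :=
      fun σ hσ => le_antisymm (hcon σ hσ) (hw0 σ)
    have hwone : w (Equiv.refl (Fin n)) = 1 := by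
      rw [← hw1]
      rw [Finset.sum_eq_single (Equiv.refl (Fin n))]
      · intro σ _ hσ; exact hzero σ hσ
      · intro h; exact absurd (Finset.mem_univ _) h
    apply hne
    funext i j
    rw [hEntry i j, Finset.sum_eq_single (Equiv.refl (Fin n))]
    · rw [hwone, one_mul]
    · intro σ _ hσ; rw [hzero σ hσ, zero_mul]
    · intro h; exact absurd (Finset.mem_univ _) h
  obtain ⟨σ₀, hσ₀, hwσ₀⟩ := hex
  have hmono := strictMono_monovary hx hy
  have hC : ∑ σ : Equiv.Perm (Fin n), w σ * ∑ i : Fin n, x i * y i = ∑ i : Fin n, x i * y i := by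
    rw [← Finset.sum_mul, hw1, one_mul]
  rw [hswap, ← hC]
  refine Finset.sum_lt_sum (fun σ _ => ?_) ⟨σ₀, Finset.mem_univ _, ?_⟩
  · exact mul_le_mul_of_nonneg_left (hmono.sum_mul_comp_perm_le_sum_mul) (hw0 σ)
  · refine mul_lt_mul_of_pos_left ?_ hwσ₀
    exact hmono.sum_mul_comp_perm_lt_sum_mul_iff.2 (not_monovary_comp hx hy σ₀ hσ₀)

/-- For strictly increasing reals `x₁ < … < xₙ` and `y₁ < … < yₙ`, the identity matrix is the
unique maximizer over doubly stochastic matrices of `π ↦ ∑ᵢⱼ xᵢ yⱼ πᵢⱼ`, and the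
anti-identity permutation matrix (of `i ↦ n + 1 - i`) is its unique minimizer. -/
theorem id_unique_max_antiId_unique_min (n : ℕ) (x y : Fin n → ℝ)
    (hx : StrictMono x) (hy : StrictMono y) :
    (permMat n (Equiv.refl (Fin n)) ∈ DSset n ∧
      ∀ π ∈ DSset n, π ≠ permMat n (Equiv.refl (Fin n)) →
        ∑ i : Fin n, ∑ j : Fin n, x i * y j * π i j <
          ∑ i : Fin n, ∑ j : Fin n, x i * y j * permMat n (Equiv.refl (Fin n)) i j) ∧
    (permMat n Fin.revPerm ∈ DSset n ∧
      ∀ π ∈ DSset n, π ≠ permMat n Fin.revPerm →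
        ∑ i : Fin n, ∑ j : Fin n, x i * y j * permMat n Fin.revPerm i j <
          ∑ i : Fin n, ∑ j : Fin n, x i * y j * π i j) := by
  refine ⟨⟨permMat_mem_DSset n _, fun π hπ hne => ?_⟩, ⟨permMat_mem_DSset n _, fun π hπ hne => ?_⟩⟩
  · rw [sum_permMat]
    simpa using key_lt n x y hx hy π hπ hne
  · -- minimization via reversal
    set y' : Fin n → ℝ := fun j => -(y j.rev) with hy'def
    have hy' : StrictMono y' := by
      intro i j hij
      simp only [hy'def, neg_lt_neg_iff]
      exact hy (Fin.rev_lt_rev.2 hij)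
    set π' : Fin n → Fin n → ℝ := fun i j => π i j.rev with hπ'def
    have hπ' : π' ∈ DSset n := by
      obtain ⟨h0, hr, hc⟩ := hπ
      refine ⟨fun i j => h0 i j.rev, fun i => ?_, fun j => hc j.rev⟩
      rw [← hr i]
      exact Fintype.sum_equiv Fin.revPerm _ _ (fun j => rfl)
    have hπ'ne : π' ≠ permMat n (Equiv.refl (Fin n)) := by
      intro h
      apply hne
      funext i j
      have h2 := congrFun (congrFun h i) j.rev
      simp only [hπ'def, Fin.rev_rev, permMat, Equiv.refl_apply, Fin.revPerm_apply] at h2 ⊢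
      rw [h2]
      refine if_congr ?_ rfl rfl
      exact Fin.rev_eq_iff
    have hkey := key_lt n x y' hx hy' π' hπ' hπ'ne
    have hL : ∑ i : Fin n, ∑ j : Fin n, x i * y' j * π' i j
        = -∑ i : Fin n, ∑ j : Fin n, x i * y j * π i j := by
      rw [← Finset.sum_neg_distrib]
      refine Finset.sum_congr rfl fun i _ => ?_
      rw [← Finset.sum_neg_distrib]
      refine Fintype.sum_equiv Fin.revPerm _ _ (fun j => ?_)
      simp only [hπ'def, hy'def, Fin.revPerm_apply, Fin.rev_rev]
      ring
    have hR : ∑ i : Fin n, x i * y' i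
        = -∑ i : Fin n, ∑ j : Fin n, x i * y j * permMat n Fin.revPerm i j := by
      rw [sum_permMat, ← Finset.sum_neg_distrib]
      refine Finset.sum_congr rfl fun i _ => ?_
      simp only [hy'def, Fin.revPerm_apply]
      ring
    rw [hL, hR, neg_lt_neg_iff] at hkey
    exact hkey
end
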